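/- arXiv:1907.07163 — 4 statements merged into one kernel-verified Lean document; each statement's English description precedes it below -/
import Mathlib

section
/- Let (X,d) be a complete and separable metric space and m a non-negative Borel measure on X which is finite on bounded sets. Let k : X × X → (0,∞) be measurable with ∫ k(x,y) dm(y) = 1 for every x ∈ X, and set P f(x) := ∫ f(y)·k(x,y) dm(y). Assume that P satisfies the dimension-free Harnack inequality with constant c > 0, i.e. |P f(x)|^p ≤ P(|f|^p)(y) · exp(p·c·d(x,y)²/(2·(p−1))) for every p ∈ (1,∞), every x,y ∈ X and every f ∈ L¹(m) ∩ L∞(m), and that P is strong Feller, i.e. P g is continuous and bounded for every g ∈ L∞(m). Then for every f ∈ L¹(m) ∩ L∞(m) with f ≥ 0 m-a.e., every δ > 0 and every non-isolated point x ∈ X it holds limsup_{y→x} (Pf(y) − Pf(x))/d(x,y) ≤ δ·( P(f·log f)(x) − Pf(x)·log Pf(x) ) + (c/(2δ))·Pf(x), where 0·log 0 := 0. -/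
open MeasureTheory Metric Filter Topology Real
open scoped ENNReal

/-!
Put `φ p = ∫ f ^ p k(x, ·) dm`, so that `φ 1 = Pf(x)` and `φ' 1 = P(f log f)(x)`. For `d(x, y) ≤ t`,
the Harnack inequality with exponent `p = 1 + δ t` bounds `Pf(y)` by
`h t = exp (log φ(1 + δ t) / (1 + δ t) + c t / (2 δ))`. As `h 0 = Pf(x)`, the difference quotients
at `x` are dominated by the slopes of `h` at `0`, which tend to `h' 0`, the right-hand side.
Taking `y = x` gives `h 0 ≤ h t`, hence `h' 0 ≥ 0`; this covers the case where the quotients are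
unbounded below and the limsup takes the junk value `0`.
-/

theorem rpow_mul_abs_log_le {a M p : ℝ} (ha : 0 ≤ a) (haM : a ≤ M)
    (hp : p ∈ Set.Icc (1 / 2 : ℝ) 2) : a ^ p * |log a| ≤ 2 + M ^ 2 * |log M| := by
  obtain ⟨hp₁, hp₂⟩ := hp
  rcases ha.eq_or_lt with rfl | ha
  · simp only [log_zero, abs_zero, mul_zero]
    positivity
  rcases le_total a 1 with ha₁ | ha₁
  · have hsqrt := abs_log_mul_self_rpow_lt a (1 / 2) ha ha₁ (by norm_num)
    rw [abs_mul, abs_of_pos (rpow_pos_of_pos ha _)] at hsqrt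
    norm_num at hsqrt
    have hpow : a ^ p ≤ a ^ (1 / 2 : ℝ) := rpow_le_rpow_of_exponent_ge ha ha₁ hp₁
    have := mul_le_mul_of_nonneg_right hpow (abs_nonneg (log a))
    have : 0 ≤ M ^ 2 * |log M| := by positivity
    linarith
  · have hpow : a ^ p ≤ M ^ 2 :=
      (rpow_le_rpow_of_exponent_le ha₁ hp₂).trans (by rw [rpow_two]; gcongr)
    have hlog : |log a| ≤ |log M| := by
      rw [abs_of_nonneg (log_nonneg ha₁), abs_of_nonneg (log_nonneg (ha₁.trans haM))]
      exact log_le_log ha haM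
    have := mul_le_mul hpow hlog (abs_nonneg _) (by positivity)
    linarith

theorem hasDerivAt_integral_rpow_mul {α : Type*} [MeasurableSpace α] {μ : Measure α}
    {f w : α → ℝ} (hf : MemLp f ∞ μ) (hf₀ : ∀ᵐ y ∂μ, 0 ≤ f y) (hw : Integrable w μ) :
    HasDerivAt (fun p : ℝ => ∫ y, f y ^ p * w y ∂μ) (∫ y, f y * log (f y) * w y ∂μ) 1 := by
  set M := lpNorm f ∞ μ
  have hfM : ∀ᵐ y ∂μ, 0 ≤ f y ∧ f y ≤ M := by
    filter_upwards [hf₀, ae_le_lpNorm_exponent_top hf] with y h₀ hM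
    exact ⟨h₀, (le_abs_self _).trans hM⟩
  have hmeas : ∀ p : ℝ, 0 ≤ p → AEStronglyMeasurable (fun y => f y ^ p) μ := fun p hp =>
    (continuous_rpow_const hp).comp_aestronglyMeasurable hf.1
  have hderiv := hasDerivAt_integral_of_dominated_loc_of_deriv_le (x₀ := (1 : ℝ))
    (F := fun p y => f y ^ p * w y) (F' := fun p y => f y ^ p * log (f y) * w y)
    (bound := fun y => (2 + M ^ 2 * |log M|) * |w y|) (s := Set.Ioo (1 / 2) 2)
    (Ioo_mem_nhds (by norm_num) (by norm_num))
    ((eventually_gt_nhds one_pos).mono fun p hp => (hmeas p hp.le).mul hw.1)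
    (hw.bdd_mul (c := M) (hmeas 1 zero_le_one) ?_) ?_ ?_ (hw.norm.const_mul _) ?_
  · simpa only [rpow_one] using hderiv.2
  · filter_upwards [hfM] with y hy
    rw [rpow_one, norm_of_nonneg hy.1]
    exact hy.2
  · exact ((hmeas 1 zero_le_one).mul
      (measurable_log.comp_aemeasurable hf.1.aemeasurable).aestronglyMeasurable).mul hw.1
  · filter_upwards [hfM] with y hy p hp
    rw [norm_mul, norm_mul, norm_of_nonneg (rpow_nonneg hy.1 p), Real.norm_eq_abs,
      Real.norm_eq_abs]
    gcongr
    exact rpow_mul_abs_log_le hy.1 hy.2 (Set.Ioo_subset_Icc_self hp)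
  · filter_upwards [hfM] with y hy p hp
    have hp₀ : 0 < p := by linarith [hp.1]
    rcases hy.1.eq_or_lt with hzero | hpos
    · rw [← hzero, zero_rpow hp₀.ne', zero_mul, zero_mul]
      refine (hasDerivAt_const p (0 : ℝ)).congr_of_eventuallyEq ?_
      filter_upwards [Ioi_mem_nhds hp₀] with q hq
      rw [zero_rpow (ne_of_gt hq), zero_mul]
    · exact (hasStrictDerivAt_const_rpow hpos p).hasDerivAt.mul_const (w y)

theorem le_exp_of_abs_rpow_le_mul_exp {u A B p : ℝ} (hA : 0 ≤ A) (hp : 0 < p)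
    (h : |u| ^ p ≤ A * exp B) : u ≤ exp ((log A + B) / p) := by
  rcases hA.eq_or_lt with rfl | hA
  · have hu : |u| = 0 :=
      (rpow_eq_zero (abs_nonneg u) hp.ne').1 (le_antisymm (by simpa using h) (by positivity))
    linarith [le_abs_self u, exp_pos ((log 0 + B) / p)]
  · calc u ≤ |u| := le_abs_self u
      _ ≤ (A * exp B) ^ p⁻¹ := (le_rpow_inv_iff_of_pos (abs_nonneg u) (by positivity) hp).2 h
      _ = exp ((log A + B) / p) := by
        rw [rpow_def_of_pos (by positivity), log_mul hA.ne' (exp_pos B).ne', log_exp,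
          div_eq_mul_inv]

noncomputable def harnackBound (φ : ℝ → ℝ) (δ a t : ℝ) : ℝ :=
  exp (log (φ (1 + δ * t)) / (1 + δ * t) + a * t)

theorem harnackBound_zero {φ : ℝ → ℝ} (hφ : 0 < φ 1) (δ a : ℝ) : harnackBound φ δ a 0 = φ 1 := by
  simp [harnackBound, exp_log hφ]

theorem hasDerivAt_harnackBound {φ : ℝ → ℝ} {D : ℝ} (hφ : HasDerivAt φ D 1) (hφ₁ : 0 < φ 1)
    (δ a : ℝ) :
    HasDerivAt (harnackBound φ δ a) (δ * (D - φ 1 * log (φ 1)) + a * φ 1) 0 := by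
  have hp : HasDerivAt (fun t : ℝ => 1 + δ * t) δ 0 := by
    simpa using ((hasDerivAt_id (0 : ℝ)).const_mul δ).const_add 1
  have hp₀ : 1 + δ * 0 = 1 := by ring
  have hlog : HasDerivAt (fun t => log (φ (1 + δ * t))) (D * δ / φ 1) 0 := by
    have := (hp₀ ▸ hφ).comp 0 hp
    simpa [hp₀] using this.log (by simpa [hp₀] using hφ₁.ne')
  have hg : HasDerivAt (fun t => log (φ (1 + δ * t)) / (1 + δ * t) + a * t)
      (δ * (D / φ 1 - log (φ 1)) + a) 0 :=
    ((hlog.div hp (by norm_num)).add ((hasDerivAt_id (0 : ℝ)).const_mul a)).congr_deriv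
      (by simp only [hp₀]; ring)
  refine hg.exp.congr_deriv ?_
  simp only [mul_zero, add_zero, div_one, exp_log hφ₁]
  field_simp

theorem le_harnackBound {X : Type*} [PseudoMetricSpace X] {F : X → ℝ} {φ : ℝ → ℝ} {c δ : ℝ}
    {x : X} (hφ : ∀ p, 0 ≤ φ p) (hc : 0 ≤ c) (hδ : 0 < δ)
    (harnack : ∀ p > 1, ∀ y, |F y| ^ p ≤ φ p * exp (p * c * dist x y ^ 2 / (2 * (p - 1)))) :
    ∀ t > 0, ∀ y, dist x y ≤ t → F y ≤ harnackBound φ δ (c / (2 * δ)) t := by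
  intro t ht y hy
  have hp : 1 < 1 + δ * t := by linarith [mul_pos hδ ht]
  refine (le_exp_of_abs_rpow_le_mul_exp (hφ _) (by linarith) (harnack _ hp y)).trans ?_
  rw [harnackBound, exp_le_exp, add_div, add_le_add_iff_left]
  have hdist : dist x y ^ 2 / t ≤ t := by
    rw [div_le_iff₀ ht]
    nlinarith [dist_nonneg (x := x) (y := y)]
  calc (1 + δ * t) * c * dist x y ^ 2 / (2 * (1 + δ * t - 1)) / (1 + δ * t)
      = c / (2 * δ) * (dist x y ^ 2 / t) := by
        field_simp
        ring
    _ ≤ c / (2 * δ) * t := by gcongr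

theorem limsup_div_dist_le_of_hasDerivAt {X : Type*} [MetricSpace X] {F : X → ℝ} {g : ℝ → ℝ}
    {L : ℝ} {x : X} [(𝓝[≠] x).NeBot] (hg : HasDerivAt g L 0) (hg₀ : g 0 = F x)
    (hle : ∀ t > 0, ∀ y, dist x y ≤ t → F y ≤ g t) :
    limsup (fun y => (F y - F x) / dist x y) (𝓝[≠] x) ≤ L := by
  have hslope : Tendsto (slope g 0) (𝓝[>] 0) (𝓝 L) :=
    (hasDerivWithinAt_iff_tendsto_slope' Set.self_notMem_Ioi).1 hg.hasDerivWithinAt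
  have hslope_nonneg : ∀ t > 0, 0 ≤ slope g 0 t := fun t ht => by
    rw [slope_def_field, sub_zero, hg₀]
    exact div_nonneg (sub_nonneg.2 (hle t ht x (by simpa using ht.le))) ht.le
  have hdist : Tendsto (dist x) (𝓝[≠] x) (𝓝[>] 0) := by
    refine tendsto_nhdsWithin_of_tendsto_nhds_of_eventually_within _ ?_ ?_
    · simpa using ((continuous_const (y := x)).dist continuous_id).tendsto x
        |>.mono_left nhdsWithin_le_nhds
    · filter_upwards [self_mem_nhdsWithin] with y hy
      exact dist_pos.2 (Ne.symm hy)
  have hquot : ∀ᶠ y in 𝓝[≠] x, (F y - F x) / dist x y ≤ slope g 0 (dist x y) := by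
    filter_upwards [self_mem_nhdsWithin] with y hy
    rw [slope_def_field, sub_zero, hg₀]
    gcongr
    exact hle _ (dist_pos.2 (Ne.symm hy)) y le_rfl
  by_cases hcobdd : IsCoboundedUnder (· ≤ ·) (𝓝[≠] x) (fun y => (F y - F x) / dist x y)
  · exact (limsup_le_limsup hquot hcobdd (hslope.comp hdist).isBoundedUnder_le).trans_eq
      (hslope.comp hdist).limsup_eq
  · rw [Real.limsup_of_not_isCoboundedUnder hcobdd]
    exact ge_of_tendsto hslope (eventually_nhdsWithin_of_forall hslope_nonneg)

theorem ae_eq_zero_of_integral_mul_eq_zero {α : Type*} [MeasurableSpace α] {μ : Measure α}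
    {f w : α → ℝ} (hf₀ : ∀ᵐ y ∂μ, 0 ≤ f y) (hw : ∀ y, 0 < w y)
    (hfw : Integrable (fun y => f y * w y) μ) (h : ∫ y, f y * w y ∂μ = 0) : f =ᵐ[μ] 0 := by
  have hfw₀ : (fun y => f y * w y) =ᵐ[μ] 0 :=
    (integral_eq_zero_iff_of_nonneg_ae
      (by filter_upwards [hf₀] with y hy using mul_nonneg hy (hw y).le) hfw).1 h
  filter_upwards [hfw₀] with y hy
  exact (mul_eq_zero.1 hy).resolve_right (hw y).ne'

theorem difference_quotient_estimate_general
    {X : Type*} [MetricSpace X] [MeasurableSpace X] (m : Measure X) (k : X → X → ℝ)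
    (hk_pos : ∀ x y, 0 < k x y)
    (hk_prob : ∀ x : X, ∫ y, k x y ∂m = 1)
    (P : (X → ℝ) → X → ℝ)
    (hP : ∀ (f : X → ℝ) (x : X), P f x = ∫ y, f y * k x y ∂m)
    (c : ℝ) (hc : 0 < c)
    (harnack : ∀ p : ℝ, 1 < p → ∀ x y : X, ∀ f : X → ℝ,
      Integrable f m → MemLp f ⊤ m →
      |P f x| ^ p ≤ P (fun z => |f z| ^ p) y *
        Real.exp (p * c * dist x y ^ 2 / (2 * (p - 1)))) :
    ∀ f : X → ℝ, Integrable f m → MemLp f ⊤ m → (∀ᵐ y ∂m, 0 ≤ f y) →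
      ∀ δ > (0 : ℝ), ∀ x : X, (nhdsWithin x {x}ᶜ).NeBot →
        Filter.limsup (fun y => (P f y - P f x) / dist x y) (nhdsWithin x {x}ᶜ)
          ≤ δ * (P (fun y => f y * Real.log (f y)) x - P f x * Real.log (P f x))
            + c / (2 * δ) * P f x := by
  intro f hfi hfb hf₀ δ hδ x hx
  have hkx : Integrable (k x) m :=
    Integrable.of_integral_ne_zero (by rw [hk_prob x]; exact one_ne_zero)
  set φ : ℝ → ℝ := fun p => ∫ y, f y ^ p * k x y ∂m
  have hφ₁ : φ 1 = P f x := by simp only [φ, rpow_one, hP]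
  have hφ_nonneg : ∀ p, 0 ≤ φ p := fun p => integral_nonneg_of_ae <| by
    filter_upwards [hf₀] with y hy using mul_nonneg (rpow_nonneg hy p) (hk_pos x y).le
  rcases (hφ_nonneg 1).eq_or_lt with hφ₁_zero | hφ₁_pos
  · have hf : f =ᵐ[m] 0 := ae_eq_zero_of_integral_mul_eq_zero hf₀ (hk_pos x)
      (hkx.mul_of_top_right hfb) (by rw [← hP, ← hφ₁, hφ₁_zero])
    have hP_zero : ∀ g : X → ℝ, g =ᵐ[m] 0 → ∀ z, P g z = 0 := fun g hg z => by
      rw [hP]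
      exact integral_eq_zero_of_ae (by filter_upwards [hg] with y hy; simp [hy])
    have hflogf : (fun y => f y * Real.log (f y)) =ᵐ[m] 0 := by
      filter_upwards [hf] with y hy; simp [hy]
    simp [hP_zero f hf, hP_zero _ hflogf]
  · have hD : HasDerivAt φ (P (fun y => f y * Real.log (f y)) x) 1 := by
      simpa only [hP] using hasDerivAt_integral_rpow_mul hfb hf₀ hkx
    have harnack_x : ∀ p > 1, ∀ y,
        |P f y| ^ p ≤ φ p * Real.exp (p * c * dist x y ^ 2 / (2 * (p - 1))) := fun p hp y => by
      convert harnack p hp y x f hfi hfb using 2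
      · rw [hP]
        exact integral_congr_ae (by filter_upwards [hf₀] with z hz; simp [abs_of_nonneg hz])
      · rw [dist_comm]
    have := limsup_div_dist_le_of_hasDerivAt (hasDerivAt_harnackBound hD hφ₁_pos δ (c / (2 * δ)))
      (harnackBound_zero hφ₁_pos _ _ |>.trans hφ₁) (le_harnackBound hφ_nonneg hc.le hδ harnack_x)
    rwa [hφ₁] at this

/-- **One-sided difference-quotient estimate** in the proof of the local logarithmic
Sobolev inequality.  Let `(X, d)` be a complete separable metric space, `m` a nonnegative
Borel measure which is finite on bounded sets, `k : X × X → (0,∞)` a measurable kernel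
with `∫ k(x,y) dm(y) = 1` for every `x`, and `P f (x) := ∫ f(y) k(x,y) dm(y)`.
Assume the dimension-free Harnack inequality with constant `c > 0` and that `P` is
strong Feller.  Then for every `f ∈ L¹ ∩ L∞(m)` with `f ≥ 0` m-a.e., every `δ > 0` and
every non-isolated point `x ∈ X`,
`limsup_{y → x} (Pf(y) - Pf(x))/d(x,y) ≤ δ (P(f log f)(x) - Pf(x) log Pf(x)) + (c/(2δ)) Pf(x)`
(with the convention `0 log 0 = 0`, realized by `Real.log 0 = 0`). -/
theorem difference_quotient_estimate
    {X : Type*} [MetricSpace X] [CompleteSpace X] [TopologicalSpace.SeparableSpace X]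
    [MeasurableSpace X] [BorelSpace X] (m : Measure X)
    (hm : ∀ s : Set X, Bornology.IsBounded s → m s < ⊤)
    (k : X → X → ℝ)
    (hk_meas : Measurable (fun p : X × X => k p.1 p.2))
    (hk_pos : ∀ x y, 0 < k x y)
    (hk_prob : ∀ x : X, ∫ y, k x y ∂m = 1)
    (P : (X → ℝ) → X → ℝ)
    (hP : ∀ (f : X → ℝ) (x : X), P f x = ∫ y, f y * k x y ∂m)
    (c : ℝ) (hc : 0 < c)
    (harnack : ∀ p : ℝ, 1 < p → ∀ x y : X, ∀ f : X → ℝ,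
      Integrable f m → MemLp f ⊤ m →
      |P f x| ^ p ≤ P (fun z => |f z| ^ p) y *
        Real.exp (p * c * dist x y ^ 2 / (2 * (p - 1))))
    (feller : ∀ g : X → ℝ, Measurable g → MemLp g ⊤ m →
      Continuous (P g) ∧ ∃ M : ℝ, ∀ x : X, |P g x| ≤ M) :
    ∀ f : X → ℝ, Integrable f m → MemLp f ⊤ m → (∀ᵐ y ∂m, 0 ≤ f y) →
      ∀ δ > (0 : ℝ), ∀ x : X, (nhdsWithin x {x}ᶜ).NeBot →
        Filter.limsup (fun y => (P f y - P f x) / dist x y) (nhdsWithin x {x}ᶜ)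
          ≤ δ * (P (fun y => f y * Real.log (f y)) x - P f x * Real.log (P f x))
            + c / (2 * δ) * P f x :=
  difference_quotient_estimate_general m k hk_pos hk_prob P hP c hc harnack
end

section
/- Let m be a σ-finite measure on a measurable space, let C ≥ 0, and let u : [0,∞) → L¹(m) ∩ L²(m) satisfy: (a) t ↦ u_t is continuous as a map from [0,∞) into L²(m); (b) |u_t| ≤ C m-a.e. for every t ≥ 0; (c) the L¹-norm ‖u_t‖_{L¹(m)} equals ‖u_0‖_{L¹(m)} for every t ≥ 0. Then for every p ∈ [1,∞) the map t ↦ u_t is continuous as a map from [0,∞) into L^p(m). -/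
/-!
Along a subsequence, L²-convergence gives a.e. convergence, and since the L¹ norms are
conserved, Scheffé's lemma upgrades a.e. convergence to L¹-convergence. As all the functions are
bounded by `C`, the differences `f = u s - u t` satisfy `‖f‖_p^p ≤ (2C)^(p-1) ‖f‖_1`, so
L¹-convergence gives Lᵖ-convergence.
-/

open MeasureTheory Filter
open scoped ENNReal Topology

namespace MeasureTheory

variable {α E : Type*} [MeasurableSpace α] {μ : Measure α} [NormedAddCommGroup E]

theorem Integrable.eLpNorm_one_eq_ofReal_integral_norm {f : α → E} (hf : Integrable f μ) :
    eLpNorm f 1 μ = ENNReal.ofReal (∫ x, ‖f x‖ ∂μ) := by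
  rw [eLpNorm_one_eq_lintegral_enorm, ofReal_integral_norm_eq_lintegral_enorm hf]

/-- **Scheffé's lemma.** -/
theorem tendsto_integral_norm_sub_of_ae_tendsto {ι : Type*} {l : Filter ι}
    [l.IsCountablyGenerated]
    {f : ι → α → E} {g : α → E} (hf : ∀ i, Integrable (f i) μ) (hg : Integrable g μ)
    (hfg : ∀ᵐ x ∂μ, Tendsto (fun i => f i x) l (𝓝 (g x)))
    (hmass : ∀ i, ∫ x, ‖f i x‖ ∂μ = ∫ x, ‖g x‖ ∂μ) :
    Tendsto (fun i => ∫ x, ‖f i x - g x‖ ∂μ) l (𝓝 0) := by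
  -- `‖g‖ + ‖f i - g‖ - ‖f i‖` has the same integral as `‖f i - g‖` and lies in `[0, 2‖g‖]`.
  have hint : ∀ i, ∫ x, ‖g x‖ + ‖f i x - g x‖ - ‖f i x‖ ∂μ = ∫ x, ‖f i x - g x‖ ∂μ :=
    fun i => by
    have hdiff : Integrable (fun x => f i x - g x) μ := (hf i).sub hg
    have hsum : Integrable (fun x => ‖g x‖ + ‖f i x - g x‖) μ := hg.norm.add hdiff.norm
    rw [integral_sub hsum (hf i).norm, integral_add hg.norm hdiff.norm, hmass i,
      add_sub_cancel_left]
  have hdom : Tendsto (fun i => ∫ x, ‖g x‖ + ‖f i x - g x‖ - ‖f i x‖ ∂μ) l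
      (𝓝 (∫ _, (0 : ℝ) ∂μ)) := by
    refine tendsto_integral_filter_of_dominated_convergence (fun x => 2 * ‖g x‖)
      (Eventually.of_forall fun i =>
        ((hg.norm.add ((hf i).sub hg).norm).sub (hf i).norm).aestronglyMeasurable)
      (Eventually.of_forall fun i => Eventually.of_forall fun x => ?_) (hg.norm.const_mul 2) ?_
    · have h₁ := norm_sub_le (f i x) (g x)
      have h₂ := norm_le_norm_sub_add (f i x) (g x)
      rw [Real.norm_eq_abs, abs_le]
      constructor <;> linarith
    · filter_upwards [hfg] with x hx
      have := (tendsto_const_nhds (x := ‖g x‖)).add ((hx.sub_const (g x)).norm) |>.sub hx.norm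
      simpa using this
  simpa [hint] using hdom

theorem tendsto_eLpNorm_one_sub_of_ae_tendsto {ι : Type*} {l : Filter ι}
    [l.IsCountablyGenerated] {f : ι → α → E} {g : α → E} (hf : ∀ i, Integrable (f i) μ)
    (hg : Integrable g μ)
    (hfg : ∀ᵐ x ∂μ, Tendsto (fun i => f i x) l (𝓝 (g x)))
    (hmass : ∀ i, eLpNorm (f i) 1 μ = eLpNorm g 1 μ) :
    Tendsto (fun i => eLpNorm (f i - g) 1 μ) l (𝓝 0) := by
  have hmass' : ∀ i, ∫ x, ‖f i x‖ ∂μ = ∫ x, ‖g x‖ ∂μ := fun i => by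
    have := congrArg ENNReal.toReal (hmass i)
    rwa [(hf i).eLpNorm_one_eq_ofReal_integral_norm, hg.eLpNorm_one_eq_ofReal_integral_norm,
      ENNReal.toReal_ofReal (integral_nonneg fun _ => norm_nonneg _),
      ENNReal.toReal_ofReal (integral_nonneg fun _ => norm_nonneg _)] at this
  simp only [fun i => ((hf i).sub hg).eLpNorm_one_eq_ofReal_integral_norm]
  simpa using ENNReal.tendsto_ofReal (tendsto_integral_norm_sub_of_ae_tendsto hf hg hfg hmass')

theorem tendsto_eLpNorm_one_sub_of_tendstoInMeasure {ι : Type*} {l : Filter ι}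
    [l.IsCountablyGenerated] {f : ι → α → E} {g : α → E} (hf : ∀ i, Integrable (f i) μ)
    (hg : Integrable g μ) (hfg : TendstoInMeasure μ f l g)
    (hmass : ∀ i, eLpNorm (f i) 1 μ = eLpNorm g 1 μ) :
    Tendsto (fun i => eLpNorm (f i - g) 1 μ) l (𝓝 0) := by
  refine tendsto_of_subseq_tendsto fun ns hns => ?_
  obtain ⟨φ, -, hφ⟩ := (hfg.comp hns).exists_seq_tendsto_ae
  exact ⟨φ, tendsto_eLpNorm_one_sub_of_ae_tendsto (fun n => hf _) hg hφ fun n => hmass _⟩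

theorem eLpNorm_le_rpow_mul_eLpNorm_one_of_ae_enorm_le {f : α → E} {B : ℝ≥0∞} (hB : B ≠ ∞)
    {p : ℝ≥0∞} (hp : 1 ≤ p) (hp_top : p ≠ ∞) (hf : ∀ᵐ x ∂μ, ‖f x‖ₑ ≤ B) :
    eLpNorm f p μ ≤ (B ^ (p.toReal - 1) * eLpNorm f 1 μ) ^ (1 / p.toReal) := by
  have hp_real : 1 ≤ p.toReal := by simpa using ENNReal.toReal_mono hp_top hp
  rw [eLpNorm_eq_lintegral_rpow_enorm_toReal (by positivity) hp_top,
    eLpNorm_one_eq_lintegral_enorm,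
    ← lintegral_const_mul' _ _ (ENNReal.rpow_ne_top_of_nonneg (by linarith) hB)]
  gcongr ?_ ^ _
  refine lintegral_mono_ae (hf.mono fun x hx => ?_)
  calc ‖f x‖ₑ ^ p.toReal = ‖f x‖ₑ ^ (p.toReal - 1) * ‖f x‖ₑ ^ (1 : ℝ) := by
        rw [← ENNReal.rpow_add_of_nonneg _ _ (by linarith) zero_le_one, sub_add_cancel]
    _ = ‖f x‖ₑ ^ (p.toReal - 1) * ‖f x‖ₑ := by rw [ENNReal.rpow_one]
    _ ≤ B ^ (p.toReal - 1) * ‖f x‖ₑ := by gcongr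

theorem tendsto_eLpNorm_of_tendsto_eLpNorm_one_of_ae_enorm_le {ι : Type*} {l : Filter ι}
    {f : ι → α → E} {B : ℝ≥0∞} (hB : B ≠ ∞) {p : ℝ≥0∞} (hp : 1 ≤ p) (hp_top : p ≠ ∞)
    (hf : ∀ᶠ i in l, ∀ᵐ x ∂μ, ‖f i x‖ₑ ≤ B) (h₁ : Tendsto (fun i => eLpNorm (f i) 1 μ) l (𝓝 0)) :
    Tendsto (fun i => eLpNorm (f i) p μ) l (𝓝 0) := by
  have hp_real : 1 ≤ p.toReal := by simpa using ENNReal.toReal_mono hp_top hp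
  have hbound :
      Tendsto (fun i => (B ^ (p.toReal - 1) * eLpNorm (f i) 1 μ) ^ (1 / p.toReal)) l (𝓝 0) := by
    have hmul := ENNReal.Tendsto.const_mul (a := B ^ (p.toReal - 1)) h₁
      (Or.inr (ENNReal.rpow_ne_top_of_nonneg (by linarith) hB))
    rw [mul_zero] at hmul
    have := ((ENNReal.continuous_rpow_const (y := 1 / p.toReal)).tendsto 0).comp hmul
    rwa [ENNReal.zero_rpow_of_pos (one_div_pos.2 (by linarith))] at this
  exact tendsto_of_tendsto_of_tendsto_of_le_of_le' tendsto_const_nhds hbound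
    (Eventually.of_forall fun _ => zero_le)
    (hf.mono fun i hi => eLpNorm_le_rpow_mul_eLpNorm_one_of_ae_enorm_le hB hp hp_top hi)

end MeasureTheory

theorem lp_continuity_general
    {α : Type*} [MeasurableSpace α] (m : Measure α)
    (C : ℝ) (u : ℝ → α → ℝ)
    (hu_mem : ∀ t : ℝ, 0 ≤ t → Integrable (u t) m ∧ MemLp (u t) 2 m)
    (hu_cont : ∀ t : ℝ, 0 ≤ t →
      Tendsto (fun s => eLpNorm (fun x => u s x - u t x) 2 m)
        (nhdsWithin t (Set.Ici 0)) (nhds 0))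
    (hu_bdd : ∀ t : ℝ, 0 ≤ t → ∀ᵐ x ∂m, |u t x| ≤ C)
    (hu_mass : ∀ t : ℝ, 0 ≤ t → eLpNorm (u t) 1 m = eLpNorm (u 0) 1 m) :
    ∀ p : ℝ≥0∞, 1 ≤ p → p ≠ ⊤ → ∀ t : ℝ, 0 ≤ t →
      Tendsto (fun s => eLpNorm (fun x => u s x - u t x) p m)
        (nhdsWithin t (Set.Ici 0)) (nhds 0) := by
  intro p hp hp_top t ht
  have hL1 : Tendsto (fun s => eLpNorm (fun x => u s x - u t x) 1 m)
      (nhdsWithin t (Set.Ici 0)) (nhds 0) := by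
    have hL2 := hu_cont t ht
    -- Indexing by the subtype `Set.Ici 0`, the hypotheses hold at every index, not just eventually.
    rw [tendsto_nhdsWithin_iff_subtype (Set.mem_Ici.2 ht)] at hL2 ⊢
    have hint : ∀ s : Set.Ici (0 : ℝ), Integrable (u s) m := fun s => (hu_mem s s.2).1
    exact tendsto_eLpNorm_one_sub_of_tendstoInMeasure hint (hu_mem t ht).1
      (tendstoInMeasure_of_tendsto_eLpNorm two_ne_zero (fun s => (hint s).aestronglyMeasurable)
        (hu_mem t ht).1.aestronglyMeasurable hL2)
      fun s => (hu_mass s s.2).trans (hu_mass t ht).symm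
  refine tendsto_eLpNorm_of_tendsto_eLpNorm_one_of_ae_enorm_le
    (ENNReal.ofReal_ne_top (r := 2 * C)) hp hp_top ?_ hL1
  filter_upwards [self_mem_nhdsWithin] with s hs
  filter_upwards [hu_bdd s hs, hu_bdd t ht] with x hus hut
  rw [Real.enorm_eq_ofReal_abs]
  exact ENNReal.ofReal_le_ofReal (by linarith [abs_sub (u s x) (u t x)] : |u s x - u t x| ≤ 2 * C)

/-- **L^p-continuity of a bounded, mass-preserving, L²-continuous curve.**
Let `m` be a σ-finite measure, `C ≥ 0`, and `u : [0,∞) → L¹(m) ∩ L²(m)` be such that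
(a) `t ↦ u t` is continuous into `L²(m)`;
(b) `|u t| ≤ C` m-a.e. for every `t ≥ 0`;
(c) `‖u t‖_{L¹(m)} = ‖u 0‖_{L¹(m)}` for every `t ≥ 0`.
Then for every `p ∈ [1,∞)` the map `t ↦ u t` is continuous into `L^p(m)`. -/
theorem lp_continuity
    {α : Type*} [MeasurableSpace α] (m : Measure α) [SigmaFinite m]
    (C : ℝ) (hC : 0 ≤ C) (u : ℝ → α → ℝ)
    (hu_mem : ∀ t : ℝ, 0 ≤ t → Integrable (u t) m ∧ MemLp (u t) 2 m)
    (hu_cont : ∀ t : ℝ, 0 ≤ t →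
      Tendsto (fun s => eLpNorm (fun x => u s x - u t x) 2 m)
        (nhdsWithin t (Set.Ici 0)) (nhds 0))
    (hu_bdd : ∀ t : ℝ, 0 ≤ t → ∀ᵐ x ∂m, |u t x| ≤ C)
    (hu_mass : ∀ t : ℝ, 0 ≤ t → eLpNorm (u t) 1 m = eLpNorm (u 0) 1 m) :
    ∀ p : ℝ≥0∞, 1 ≤ p → p ≠ ⊤ → ∀ t : ℝ, 0 ≤ t →
      Tendsto (fun s => eLpNorm (fun x => u s x - u t x) p m)
        (nhdsWithin t (Set.Ici 0)) (nhds 0) :=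
  lp_continuity_general m C u hu_mem hu_cont hu_bdd hu_mass
end

section
/- Let (X,d) be a complete and separable metric space and m a non-negative Borel measure on X which is finite on bounded sets. Let C ≥ 0 and let u : [0,∞) → L¹(m) ∩ L²(m) satisfy: (a) t ↦ u_t is continuous as a map from [0,∞) into L²(m); (b) |u_t| ≤ C m-a.e. for every t ≥ 0; (c) ‖u_t‖_{L¹(m)} = ‖u_0‖_{L¹(m)} for every t ≥ 0. Then for every T > 0, every p ∈ [1,∞) and every ε > 0 there exists a bounded Borel set B ⊆ X such that ∫_{X∖B} |u_t|^p dm < ε for all t ∈ [0,T]. -/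
/-!
Let `Bₙ` be the closed ball of radius `n` about a fixed point. By conservation of mass the tail
`Fₙ(t) = ∫_{Bₙᶜ} |u_t|` equals `‖u₀‖₁ - ∫_{Bₙ} |u_t|`, and the latter is continuous in `t`
because convergence in `L²(m)` implies convergence in `L¹(m|_{Bₙ})` as `m(Bₙ) < ∞`. Hence `(Fₙ)`
is a decreasing sequence of continuous functions on the compact interval `[0, T]` tending
pointwise to `0`, and by Dini's theorem it tends to `0` uniformly. Finally `|u_t| ≤ C` gives
`|u_t|^p ≤ C^(p-1) |u_t|`, which reduces the case `p ≥ 1` to `p = 1`.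
-/

open MeasureTheory Metric Filter Set Topology
open scoped ENNReal

lemma abs_rpow_le_rpow_sub_one_mul_abs {y C p : ℝ} (hyC : |y| ≤ C) (hp : 1 ≤ p) :
    |y| ^ p ≤ C ^ (p - 1) * |y| := by
  calc |y| ^ p = |y| ^ (p - 1) * |y| := by
        rw [← Real.rpow_add_one' (abs_nonneg y) (by linarith), sub_add_cancel]
    _ ≤ C ^ (p - 1) * |y| := by gcongr

section

variable {α : Type*} [MeasurableSpace α] {μ : Measure α}

lemma lintegral_ofReal_abs_rpow_le {f : α → ℝ} (hf : Integrable f μ) {C p : ℝ} (hC : 0 ≤ C)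
    (hfC : ∀ᵐ x ∂μ, |f x| ≤ C) (hp : 1 ≤ p) :
    ∫⁻ x, ENNReal.ofReal (|f x| ^ p) ∂μ ≤ ENNReal.ofReal (C ^ (p - 1) * ∫ x, |f x| ∂μ) := by
  have hCp : 0 ≤ C ^ (p - 1) := Real.rpow_nonneg hC _
  calc ∫⁻ x, ENNReal.ofReal (|f x| ^ p) ∂μ
      ≤ ∫⁻ x, ENNReal.ofReal (C ^ (p - 1) * |f x|) ∂μ :=
        lintegral_mono_ae <| hfC.mono fun x hx ↦
          ENNReal.ofReal_le_ofReal (abs_rpow_le_rpow_sub_one_mul_abs hx hp)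
    _ = ENNReal.ofReal (∫ x, C ^ (p - 1) * |f x| ∂μ) :=
        (ofReal_integral_eq_lintegral_ofReal (hf.abs.const_mul _)
          (.of_forall fun x ↦ mul_nonneg hCp (abs_nonneg (f x)))).symm
    _ = ENNReal.ofReal (C ^ (p - 1) * ∫ x, |f x| ∂μ) := by rw [integral_const_mul]

lemma toReal_eLpNorm_one_eq_integral_abs {f : α → ℝ} (hf : AEStronglyMeasurable f μ) :
    (eLpNorm f 1 μ).toReal = ∫ x, |f x| ∂μ := by
  rw [toReal_eLpNorm hf, lpNorm_one_eq_integral_norm hf]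
  rfl

lemma tendsto_eLpNorm_restrict_of_tendsto_eLpNorm {ι E : Type*} [NormedAddCommGroup E]
    {l : Filter ι} {f : ι → α → E} {p q : ℝ≥0∞} (hp : p ≠ 0) (hpq : p ≤ q)
    (hf : ∀ᶠ i in l, AEStronglyMeasurable (f i) μ) {S : Set α} (hS : μ S ≠ ∞)
    (h : Tendsto (fun i ↦ eLpNorm (f i) q μ) l (𝓝 0)) :
    Tendsto (fun i ↦ eLpNorm (f i) p (μ.restrict S)) l (𝓝 0) := by
  have hexp : 0 ≤ 1 / p.toReal - 1 / q.toReal := by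
    rcases eq_or_ne q ∞ with rfl | hq
    · simp
    have hp' : p ≠ ∞ := ne_top_of_le_ne_top hq hpq
    exact sub_nonneg.2 <| one_div_le_one_div_of_le (ENNReal.toReal_pos hp hp')
      (ENNReal.toReal_mono hq hpq)
  have hbound : Tendsto (fun i ↦ eLpNorm (f i) q μ * μ S ^ (1 / p.toReal - 1 / q.toReal))
      l (𝓝 0) := by
    simpa using ENNReal.Tendsto.mul_const h (Or.inr (ENNReal.rpow_ne_top_of_nonneg hexp hS))
  refine tendsto_of_tendsto_of_tendsto_of_le_of_le' tendsto_const_nhds hbound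
    (.of_forall fun _ ↦ zero_le) ?_
  filter_upwards [hf] with i hfi
  calc eLpNorm (f i) p (μ.restrict S)
      ≤ eLpNorm (f i) q (μ.restrict S) * μ.restrict S univ ^ (1 / p.toReal - 1 / q.toReal) :=
        eLpNorm_le_eLpNorm_mul_rpow_measure_univ hpq hfi.restrict
    _ ≤ eLpNorm (f i) q μ * μ S ^ (1 / p.toReal - 1 / q.toReal) := by
        rw [Measure.restrict_apply_univ]
        gcongr
        exact Measure.restrict_le_self

lemma tendsto_setIntegral_abs_sub_of_tendsto_eLpNorm {ι : Type*} {l : Filter ι}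
    {f : ι → α → ℝ} {g : α → ℝ} {q : ℝ≥0∞} (hq : 1 ≤ q)
    (hf : ∀ᶠ i in l, AEStronglyMeasurable (f i) μ) (hg : AEStronglyMeasurable g μ)
    {S : Set α} (hS : μ S ≠ ∞) (h : Tendsto (fun i ↦ eLpNorm (fun x ↦ f i x - g x) q μ) l (𝓝 0)) :
    Tendsto (fun i ↦ ∫ x in S, |f i x - g x| ∂μ) l (𝓝 0) := by
  have hmeas : ∀ᶠ i in l, AEStronglyMeasurable (fun x ↦ f i x - g x) μ :=
    hf.mono fun _ hfi ↦ hfi.sub hg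
  have hL1 := tendsto_eLpNorm_restrict_of_tendsto_eLpNorm one_ne_zero hq hmeas hS h
  refine ((ENNReal.tendsto_toReal ENNReal.zero_ne_top).comp hL1).congr' ?_
  filter_upwards [hmeas] with i hi
  exact toReal_eLpNorm_one_eq_integral_abs hi.restrict

lemma abs_setIntegral_compl_abs_sub_le {f g : α → ℝ} (hf : Integrable f μ)
    (hg : Integrable g μ) (hfg : ∫ x, |f x| ∂μ = ∫ x, |g x| ∂μ) {S : Set α}
    (hS : MeasurableSet S) :
    |∫ x in Sᶜ, |f x| ∂μ - ∫ x in Sᶜ, |g x| ∂μ| ≤ ∫ x in S, |f x - g x| ∂μ := by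
  rw [setIntegral_compl hS hf.abs, setIntegral_compl hS hg.abs, hfg, sub_sub_sub_cancel_left,
    ← integral_sub hg.abs.integrableOn hf.abs.integrableOn]
  refine (abs_integral_le_integral_abs).trans (integral_mono ?_ ?_ fun x ↦ ?_)
  · exact (hg.abs.sub hf.abs).abs.integrableOn
  · exact (hf.sub hg).abs.integrableOn
  · rw [abs_sub_comm]
    exact abs_abs_sub_abs_le_abs_sub (f x) (g x)

lemma tendsto_setIntegral_compl_abs_atTop {f : α → ℝ} (hf : Integrable f μ) {B : ℕ → Set α}
    (hB : ∀ n, MeasurableSet (B n)) (hB_mono : Monotone B) (hB_cover : ⋃ n, B n = univ) :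
    Tendsto (fun n ↦ ∫ x in (B n)ᶜ, |f x| ∂μ) atTop (𝓝 0) := by
  have hcompl : ⋂ n, (B n)ᶜ = ∅ := by rw [← compl_iUnion, hB_cover, compl_univ]
  simpa [hcompl] using tendsto_setIntegral_of_antitone (fun n ↦ (hB n).compl)
    (fun _ _ h ↦ compl_subset_compl.2 (hB_mono h)) ⟨0, hf.abs.integrableOn⟩

variable {τ : Type*} [TopologicalSpace τ] {K : Set τ} {f : τ → α → ℝ}

lemma continuousOn_setIntegral_compl_abs (hf : ∀ t ∈ K, Integrable (f t) μ)
    (hmass : ∀ s ∈ K, ∀ t ∈ K, ∫ x, |f s x| ∂μ = ∫ x, |f t x| ∂μ) {S : Set α}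
    (hS : MeasurableSet S)
    (hcont : ∀ t ∈ K, Tendsto (fun s ↦ ∫ x in S, |f s x - f t x| ∂μ) (𝓝[K] t) (𝓝 0)) :
    ContinuousOn (fun t ↦ ∫ x in Sᶜ, |f t x| ∂μ) K := by
  intro t ht
  rw [ContinuousWithinAt, tendsto_iff_dist_tendsto_zero]
  refine squeeze_zero' (.of_forall fun _ ↦ dist_nonneg) ?_ (hcont t ht)
  filter_upwards [self_mem_nhdsWithin] with s hs
  exact abs_setIntegral_compl_abs_sub_le (hf s hs) (hf t ht) (hmass s hs t ht) hS

lemma exists_forall_setIntegral_compl_abs_lt (hK : IsCompact K)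
    (hf : ∀ t ∈ K, Integrable (f t) μ)
    (hmass : ∀ s ∈ K, ∀ t ∈ K, ∫ x, |f s x| ∂μ = ∫ x, |f t x| ∂μ) {B : ℕ → Set α}
    (hB : ∀ n, MeasurableSet (B n)) (hB_mono : Monotone B) (hB_cover : ⋃ n, B n = univ)
    (hcont : ∀ n, ∀ t ∈ K, Tendsto (fun s ↦ ∫ x in B n, |f s x - f t x| ∂μ) (𝓝[K] t) (𝓝 0))
    {δ : ℝ} (hδ : 0 < δ) :
    ∃ n, ∀ t ∈ K, ∫ x in (B n)ᶜ, |f t x| ∂μ < δ := by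
  have hunif : TendstoUniformlyOn (fun n t ↦ ∫ x in (B n)ᶜ, |f t x| ∂μ) 0 atTop K :=
    Antitone.tendstoUniformlyOn_of_forall_tendsto hK
      (fun n ↦ continuousOn_setIntegral_compl_abs hf hmass (hB n) (hcont n))
      (fun t ht _ _ h ↦ setIntegral_mono_set (hf t ht).abs.integrableOn
        (.of_forall fun _ ↦ abs_nonneg _) (compl_subset_compl.2 (hB_mono h)).eventuallyLE)
      continuousOn_const
      (fun t ht ↦ tendsto_setIntegral_compl_abs_atTop (hf t ht) hB hB_mono hB_cover)
  obtain ⟨n, hn⟩ := (Metric.tendstoUniformlyOn_iff.1 hunif δ hδ).exists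
  refine ⟨n, fun t ht ↦ ?_⟩
  exact (le_abs_self _).trans_lt (by simpa using hn t ht)

end

theorem uniform_integrability_outside_bounded_set_general
    {X : Type*} [MetricSpace X]
    [MeasurableSpace X] [BorelSpace X] (m : Measure X)
    (hm : ∀ s : Set X, Bornology.IsBounded s → m s < ⊤)
    (C : ℝ) (hC : 0 ≤ C) (u : ℝ → X → ℝ)
    (hu_mem : ∀ t : ℝ, 0 ≤ t → Integrable (u t) m ∧ MemLp (u t) 2 m)
    (hu_cont : ∀ t : ℝ, 0 ≤ t →
      Tendsto (fun s => eLpNorm (fun x => u s x - u t x) 2 m)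
        (nhdsWithin t (Set.Ici 0)) (nhds 0))
    (hu_bdd : ∀ t : ℝ, 0 ≤ t → ∀ᵐ x ∂m, |u t x| ≤ C)
    (hu_mass : ∀ t : ℝ, 0 ≤ t → eLpNorm (u t) 1 m = eLpNorm (u 0) 1 m) :
    ∀ T > (0 : ℝ), ∀ p : ℝ, 1 ≤ p → ∀ ε > (0 : ℝ),
      ∃ B : Set X, MeasurableSet B ∧ Bornology.IsBounded B ∧
        ∀ t ∈ Set.Icc (0 : ℝ) T,
          ∫⁻ x in Bᶜ, ENNReal.ofReal (|u t x| ^ p) ∂m < ENNReal.ofReal ε := by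
  intro T _ p hp ε hε
  rcases isEmpty_or_nonempty X with _ | ⟨⟨x₀⟩⟩
  · refine ⟨∅, .empty, Bornology.isBounded_empty, fun t _ ↦ ?_⟩
    simpa [Measure.eq_zero_of_isEmpty m] using hε
  have hint : ∀ t ∈ Icc (0 : ℝ) T, Integrable (u t) m := fun t ht ↦ (hu_mem t ht.1).1
  have hmass : ∀ s ∈ Icc (0 : ℝ) T, ∀ t ∈ Icc (0 : ℝ) T, ∫ x, |u s x| ∂m = ∫ x, |u t x| ∂m := by
    intro s hs t ht
    rw [← toReal_eLpNorm_one_eq_integral_abs (hint s hs).1,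
      ← toReal_eLpNorm_one_eq_integral_abs (hint t ht).1, hu_mass s hs.1, hu_mass t ht.1]
  have hcont : ∀ n : ℕ, ∀ t ∈ Icc (0 : ℝ) T,
      Tendsto (fun s ↦ ∫ x in closedBall x₀ n, |u s x - u t x| ∂m) (𝓝[Icc 0 T] t) (𝓝 0) := by
    intro n t ht
    refine tendsto_setIntegral_abs_sub_of_tendsto_eLpNorm one_le_two ?_ (hint t ht).1
      (hm _ isBounded_closedBall).ne
      ((hu_cont t ht.1).mono_left (nhdsWithin_mono _ Icc_subset_Ici_self))
    filter_upwards [self_mem_nhdsWithin] with s hs using (hint s hs).1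
  obtain ⟨δ, hδ, hCδ⟩ := exists_pos_mul_lt hε (C ^ (p - 1))
  obtain ⟨n, hn⟩ := exists_forall_setIntegral_compl_abs_lt isCompact_Icc hint hmass
    (fun _ ↦ measurableSet_closedBall) (fun _ _ h ↦ closedBall_subset_closedBall (Nat.cast_le.2 h))
    (iUnion_closedBall_nat x₀) hcont hδ
  refine ⟨closedBall x₀ n, measurableSet_closedBall, isBounded_closedBall, fun t ht ↦ ?_⟩
  calc ∫⁻ x in (closedBall x₀ n)ᶜ, ENNReal.ofReal (|u t x| ^ p) ∂m
      ≤ ENNReal.ofReal (C ^ (p - 1) * ∫ x in (closedBall x₀ n)ᶜ, |u t x| ∂m) :=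
        lintegral_ofReal_abs_rpow_le (hint t ht).restrict hC (ae_restrict_of_ae (hu_bdd t ht.1)) hp
    _ < ENNReal.ofReal ε := by
        rw [ENNReal.ofReal_lt_ofReal_iff hε]
        exact lt_of_le_of_lt (by gcongr; exact (hn t ht).le) hCδ

/-- **Uniform integrability outside a bounded set.**
Let `(X, d)` be a complete separable metric space and `m` a nonnegative Borel measure
which is finite on bounded sets.  Let `C ≥ 0` and `u : [0,∞) → L¹(m) ∩ L²(m)` satisfy
(a) `t ↦ u t` is continuous into `L²(m)`;
(b) `|u t| ≤ C` m-a.e. for every `t ≥ 0`;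
(c) `‖u t‖_{L¹(m)} = ‖u 0‖_{L¹(m)}` for every `t ≥ 0`.
Then for every `T > 0`, `p ∈ [1,∞)` and `ε > 0` there is a bounded Borel set `B ⊆ X`
such that `∫_{X∖B} |u t|^p dm < ε` for all `t ∈ [0,T]`. -/
theorem uniform_integrability_outside_bounded_set
    {X : Type*} [MetricSpace X] [CompleteSpace X] [TopologicalSpace.SeparableSpace X]
    [MeasurableSpace X] [BorelSpace X] (m : Measure X)
    (hm : ∀ s : Set X, Bornology.IsBounded s → m s < ⊤)
    (C : ℝ) (hC : 0 ≤ C) (u : ℝ → X → ℝ)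
    (hu_mem : ∀ t : ℝ, 0 ≤ t → Integrable (u t) m ∧ MemLp (u t) 2 m)
    (hu_cont : ∀ t : ℝ, 0 ≤ t →
      Tendsto (fun s => eLpNorm (fun x => u s x - u t x) 2 m)
        (nhdsWithin t (Set.Ici 0)) (nhds 0))
    (hu_bdd : ∀ t : ℝ, 0 ≤ t → ∀ᵐ x ∂m, |u t x| ≤ C)
    (hu_mass : ∀ t : ℝ, 0 ≤ t → eLpNorm (u t) 1 m = eLpNorm (u 0) 1 m) :
    ∀ T > (0 : ℝ), ∀ p : ℝ, 1 ≤ p → ∀ ε > (0 : ℝ),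
      ∃ B : Set X, MeasurableSet B ∧ Bornology.IsBounded B ∧
        ∀ t ∈ Set.Icc (0 : ℝ) T,
          ∫⁻ x in Bᶜ, ENNReal.ofReal (|u t x| ^ p) ∂m < ENNReal.ofReal ε :=
  uniform_integrability_outside_bounded_set_general m hm C hC u hu_mem hu_cont hu_bdd hu_mass
end

section
/- Let (X,d) be a complete and separable metric space and m a non-negative Borel measure on X which is finite on bounded sets. Fix t > 0, c > 0 and x ∈ X with m(B_{√(2t)}(x)) > 0. Let k : X × X → (0,∞) be measurable with ∫ k(w,y) dm(y) = 1 for every w ∈ X, and set P f(w) := ∫ f(y)·k(w,y) dm(y). Assume that P satisfies the dimension-free Harnack inequality with constant c > 0, i.e. |P f(w)|^p ≤ P(|f|^p)(z) · exp(p·c·d(w,z)²/(2·(p−1))) for every p ∈ (1,∞), every w,z ∈ X and every f ∈ L¹(m) ∩ L∞(m). Fix p ∈ (1,2), set q := p/(2(p−1)), let T > q·t, and assume the integral maximum principle: for every non-negative g ∈ L^p(m) it holds ∫ (Pg)^p(y)·exp(−d(x,y)²/(2(T−qt))) dm(y) ≤ ∫ g^p(y)·exp(−d(x,y)²/(2T))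 dm(y). Then ∫ k(x,y)²·exp(d(x,y)²/(2T)) dm(y) ≤ m(B_{√(2t)}(x))^{−1} · exp( t/(T−qt) + 2·p·c·t/(2−p) ). -/
/-!
Truncate `F = k(x,·) e^{d(x,·)²/(2T)}` to bounded, boundedly supported `f ≤ F` and put
`A = P f(x) = ∫ f k(x,·) dm`. Harnack with exponent `2/p` gives
`A² ≤ (P g)^p(z) e^{p c d(x,z)²/(2-p)}` for `g = f^{2/p}`, and on the ball `B_{√(2t)}(x)` this
exponential is dominated by the Gaussian weight `e^{-d(x,z)²/(2(T-qt))}` times a constant.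
Integrating over the ball and applying the maximum principle to `g`, whose `p`-th power is `f²`,
gives `A² m(B) ≤ e^{…} ∫ f² e^{-d(x,·)²/(2T)} dm ≤ e^{…} A`. Divide by `A` and let the truncations
increase to `F`.
-/

open MeasureTheory Metric Filter
open scoped ENNReal

lemma memLp_of_bound_of_eq_zero_off {α : Type*} [MeasurableSpace α] {μ : Measure α}
    {f : α → ℝ} {s : Set α} {C : ℝ} (hf : AEStronglyMeasurable f μ) (hC : ∀ y, ‖f y‖ ≤ C)
    (hs : ∀ y ∉ s, f y = 0) (hμs : μ s ≠ ∞) (r : ℝ≥0∞) : MemLp f r μ :=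
  (memLp_top_of_bound hf C (ae_of_all _ hC)).mono_exponent_of_measure_support_ne_top hs hμs
    le_top

lemma le_div_measure_of_mul_self_le {α : Type*} [MeasurableSpace α] {μ : Measure α}
    {s : Set α} {a K : ℝ≥0∞} {Φ : α → ℝ≥0∞} (hs : MeasurableSet s) (ha : a ≠ ∞) (hK0 : K ≠ 0)
    (hK : K ≠ ∞) (hpt : ∀ z ∈ s, a * a ≤ Φ z * K) (hΦ : ∫⁻ z, Φ z ∂μ ≤ a) : a ≤ K / μ s := by
  have h : a * (a * μ s) ≤ a * K :=
    calc a * (a * μ s) = ∫⁻ _ in s, a * a ∂μ := by rw [setLIntegral_const, mul_assoc]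
      _ ≤ ∫⁻ z in s, Φ z * K ∂μ := setLIntegral_mono' hs hpt
      _ ≤ ∫⁻ z, Φ z * K ∂μ := setLIntegral_le_lintegral _ _
      _ = (∫⁻ z, Φ z ∂μ) * K := lintegral_mul_const' _ _ hK
      _ ≤ a * K := mul_le_mul_left hΦ _
  rw [ENNReal.le_div_iff_mul_le (Or.inr hK0) (Or.inr hK)]
  rcases eq_or_ne a 0 with rfl | h0
  · simp
  · exact (ENNReal.mul_le_mul_iff_right h0 ha).1 h

lemma rpow_two_div_rpow {a p : ℝ} (ha : 0 ≤ a) (hp : p ≠ 0) : (a ^ (2 / p)) ^ p = a ^ 2 := by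
  rw [← Real.rpow_mul ha, div_mul_cancel₀ _ hp, Real.rpow_two]

lemma sq_le_rpow_mul_exp_of_harnack {a b c s p : ℝ} (hp0 : 0 < p) (hp2 : p < 2)
    (h : |a| ^ (2 / p) ≤ b * Real.exp (2 / p * c * s / (2 * (2 / p - 1)))) :
    a ^ 2 ≤ b ^ p * Real.exp (p * c * s / (2 - p)) := by
  have hb : 0 ≤ b :=
    nonneg_of_mul_nonneg_left ((Real.rpow_nonneg (abs_nonneg a) _).trans h) (Real.exp_pos _)
  have hexp : p * (2 / p * c * s / (2 * (2 / p - 1))) = p * c * s / (2 - p) := by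
    have : (2 - p) ≠ 0 := by linarith
    field_simp
  calc a ^ 2 = (|a| ^ (2 / p)) ^ p := by rw [rpow_two_div_rpow (abs_nonneg a) hp0.ne', sq_abs]
    _ ≤ (b * Real.exp (2 / p * c * s / (2 * (2 / p - 1)))) ^ p :=
      Real.rpow_le_rpow (by positivity) h hp0.le
    _ = b ^ p * Real.exp (p * c * s / (2 - p)) := by
      rw [Real.mul_rpow hb (Real.exp_pos _).le, ← Real.exp_mul, mul_comm _ p, hexp]

lemma exp_le_exp_neg_div_mul_exp {c s t p τ : ℝ} (hc : 0 ≤ c) (hp0 : 0 ≤ p) (hp2 : p < 2)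
    (hτ : 0 < τ) (hs : s ≤ 2 * t) :
    Real.exp (p * c * s / (2 - p))
      ≤ Real.exp (-s / (2 * τ)) * Real.exp (t / τ + 2 * p * c * t / (2 - p)) := by
  rw [← Real.exp_add, Real.exp_le_exp]
  have hgauss : s / (2 * τ) ≤ t / τ := by
    rw [div_le_div_iff₀ (by positivity) hτ]
    nlinarith
  have hharnack : p * c * s / (2 - p) ≤ 2 * p * c * t / (2 - p) :=
    div_le_div_of_nonneg_right (by nlinarith [mul_nonneg hp0 hc]) (by linarith)
  rw [neg_div]
  linarith

lemma rpow_two_div_rpow_mul_exp_neg_le {f k s τ p : ℝ} (hp : p ≠ 0) (hf : 0 ≤ f)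
    (hfk : f ≤ k * Real.exp (s / τ)) : (f ^ (2 / p)) ^ p * Real.exp (-s / τ) ≤ f * k := by
  have hk : f * Real.exp (-s / τ) ≤ k := by
    rwa [neg_div, Real.exp_neg, ← div_eq_mul_inv, div_le_iff₀ (Real.exp_pos _)]
  calc (f ^ (2 / p)) ^ p * Real.exp (-s / τ) = f * (f * Real.exp (-s / τ)) := by
        rw [rpow_two_div_rpow hf hp]; ring
    _ ≤ f * k := mul_le_mul_of_nonneg_left hk hf

section Truncation

variable {X : Type*} [MetricSpace X]

noncomputable def ballTruncation (x : X) (F : X → ℝ) (n : ℕ) : X → ℝ :=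
  (ball x n).indicator fun y => min (F y) n

variable {x : X} {F : X → ℝ}

lemma ballTruncation_eq_zero_of_notMem {n : ℕ} {y : X} (hy : y ∉ ball x n) :
    ballTruncation x F n y = 0 :=
  Set.indicator_of_notMem hy _

lemma ballTruncation_nonneg (hF : ∀ y, 0 ≤ F y) (n : ℕ) (y : X) :
    0 ≤ ballTruncation x F n y :=
  Set.indicator_nonneg (fun y _ => le_min (hF y) n.cast_nonneg) y

lemma ballTruncation_le (hF : ∀ y, 0 ≤ F y) (n : ℕ) (y : X) : ballTruncation x F n y ≤ F y := by
  by_cases hy : y ∈ ball x n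
  · simp only [ballTruncation, Set.indicator_of_mem hy, min_le_left]
  · simp only [ballTruncation, Set.indicator_of_notMem hy, hF y]

lemma abs_ballTruncation_le (hF : ∀ y, 0 ≤ F y) (n : ℕ) (y : X) :
    |ballTruncation x F n y| ≤ n := by
  rw [abs_of_nonneg (ballTruncation_nonneg hF n y)]
  by_cases hy : y ∈ ball x n
  · simp only [ballTruncation, Set.indicator_of_mem hy, min_le_right]
  · simp only [ballTruncation, Set.indicator_of_notMem hy, n.cast_nonneg]

lemma monotone_ballTruncation (hF : ∀ y, 0 ≤ F y) : Monotone (ballTruncation x F) := by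
  intro n n' hn y
  have hnn' : (n : ℝ) ≤ n' := by exact_mod_cast hn
  by_cases hy : y ∈ ball x n
  · rw [ballTruncation, ballTruncation, Set.indicator_of_mem hy,
      Set.indicator_of_mem (ball_subset_ball hnn' hy)]
    exact min_le_min_left _ hnn'
  · rw [ballTruncation, Set.indicator_of_notMem hy]
    exact ballTruncation_nonneg hF n' y

lemma eventually_ballTruncation_eq (y : X) : ∀ᶠ n in atTop, ballTruncation x F n y = F y := by
  filter_upwards [eventually_ge_atTop ⌈F y⌉₊, eventually_gt_atTop ⌈dist y x⌉₊] with n hFn hdn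
  rw [ballTruncation, Set.indicator_of_mem, min_eq_left]
  · exact (Nat.le_ceil _).trans (by exact_mod_cast hFn)
  · exact mem_ball.2 ((Nat.le_ceil _).trans_lt (by exact_mod_cast hdn))

variable [MeasurableSpace X] [OpensMeasurableSpace X]

lemma measurable_ballTruncation (hF : Measurable F) (n : ℕ) :
    Measurable (ballTruncation x F n) :=
  (hF.min measurable_const).indicator measurableSet_ball

lemma lintegral_ofReal_mul_eq_iSup_ballTruncation (μ : Measure X) {g : X → ℝ}
    (hF0 : ∀ y, 0 ≤ F y) (hF : Measurable F) (hg0 : ∀ y, 0 ≤ g y) (hg : Measurable g) :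
    ∫⁻ y, ENNReal.ofReal (F y * g y) ∂μ
      = ⨆ n : ℕ, ∫⁻ y, ENNReal.ofReal (ballTruncation x F n y * g y) ∂μ := by
  have hmono : Monotone fun n y => ENNReal.ofReal (ballTruncation x F n y * g y) :=
    fun n n' hn y => ENNReal.ofReal_le_ofReal
      (mul_le_mul_of_nonneg_right (monotone_ballTruncation hF0 hn y) (hg0 y))
  rw [← lintegral_iSup (f := fun n y => ENNReal.ofReal (ballTruncation x F n y * g y))
    (fun n => ((measurable_ballTruncation hF n).mul hg).ennreal_ofReal) hmono]
  refine lintegral_congr fun y =>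
    tendsto_nhds_unique ?_ (tendsto_atTop_iSup fun n n' hn => hmono hn y)
  refine tendsto_const_nhds.congr' ?_
  filter_upwards [eventually_ballTruncation_eq (x := x) (F := F) y] with n hn
  rw [hn]

lemma memLp_ballTruncation {μ : Measure X} (hF0 : ∀ y, 0 ≤ F y) (hF : Measurable F) {n : ℕ}
    (hμ : μ (ball x n) ≠ ∞) (r : ℝ≥0∞) : MemLp (ballTruncation x F n) r μ :=
  memLp_of_bound_of_eq_zero_off (measurable_ballTruncation hF n).aestronglyMeasurable
    (abs_ballTruncation_le hF0 n) (fun _ => ballTruncation_eq_zero_of_notMem) hμ r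

lemma memLp_abs_rpow_ballTruncation {μ : Measure X} (hF0 : ∀ y, 0 ≤ F y) (hF : Measurable F)
    {n : ℕ} (hμ : μ (ball x n) ≠ ∞) {e : ℝ} (he : 0 < e) (r : ℝ≥0∞) :
    MemLp (fun y => |ballTruncation x F n y| ^ e) r μ := by
  refine memLp_of_bound_of_eq_zero_off (C := (n : ℝ) ^ e) ?_ (fun y => ?_) (fun y hy => ?_) hμ r
  · exact ((measurable_ballTruncation hF n).abs.pow_const e).aestronglyMeasurable
  · rw [Real.norm_of_nonneg (by positivity)]
    exact Real.rpow_le_rpow (abs_nonneg _) (abs_ballTruncation_le hF0 n y) he.le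
  · rw [ballTruncation_eq_zero_of_notMem hy, abs_zero, Real.zero_rpow he.ne']

end Truncation

theorem lintegral_mul_kernel_le_of_harnack {X : Type*} [MetricSpace X] [MeasurableSpace X]
    [OpensMeasurableSpace X] {m : Measure X} {t c p q T : ℝ} {x : X} {k : X → X → ℝ}
    {P : (X → ℝ) → X → ℝ} {f : X → ℝ} (hc : 0 ≤ c) (hp0 : 0 < p) (hp2 : p < 2)
    (hT : q * t < T) (hk_int : Integrable (k x) m) (hk_nonneg : ∀ y, 0 ≤ k x y)
    (hf0 : ∀ y, 0 ≤ f y) (hfk : ∀ y, f y ≤ k x y * Real.exp (dist x y ^ 2 / (2 * T)))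
    (hf : MemLp f ⊤ m) (hPf : P f x = ∫ y, f y * k x y ∂m)
    (harnack : ∀ z, |P f x| ^ (2 / p) ≤ P (fun u => |f u| ^ (2 / p)) z *
        Real.exp (2 / p * c * dist x z ^ 2 / (2 * (2 / p - 1))))
    (maxprin : ∫⁻ y, ENNReal.ofReal ((P (fun u => |f u| ^ (2 / p)) y) ^ p *
          Real.exp (-dist x y ^ 2 / (2 * (T - q * t)))) ∂m
        ≤ ∫⁻ y, ENNReal.ofReal ((|f y| ^ (2 / p)) ^ p * Real.exp (-dist x y ^ 2 / (2 * T))) ∂m) :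
    ∫⁻ y, ENNReal.ofReal (f y * k x y) ∂m
      ≤ ENNReal.ofReal (Real.exp (t / (T - q * t) + 2 * p * c * t / (2 - p))) /
        m (ball x (Real.sqrt (2 * t))) := by
  have hfk0 : ∀ y, 0 ≤ f y * k x y := fun y => mul_nonneg (hf0 y) (hk_nonneg y)
  have hPf0 : 0 ≤ P f x := hPf ▸ integral_nonneg hfk0
  have hPf_eq : ENNReal.ofReal (P f x) = ∫⁻ y, ENNReal.ofReal (f y * k x y) ∂m := by
    rw [hPf]
    refine ofReal_integral_eq_lintegral_ofReal ?_ (ae_of_all _ hfk0)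
    exact (hk_int.mul_of_top_left hf).congr (ae_of_all _ fun y => mul_comm _ _)
  rw [← hPf_eq]
  refine le_div_measure_of_mul_self_le (Φ := fun z => ENNReal.ofReal
      ((P (fun u => |f u| ^ (2 / p)) z) ^ p * Real.exp (-dist x z ^ 2 / (2 * (T - q * t)))))
    measurableSet_ball ENNReal.ofReal_ne_top
    (ENNReal.ofReal_pos.2 (Real.exp_pos _)).ne' ENNReal.ofReal_ne_top (fun z hz => ?_) ?_
  · have hdist : dist x z ^ 2 ≤ 2 * t :=
      ((Real.lt_sqrt dist_nonneg).1 (by rwa [dist_comm, ← mem_ball])).le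
    have hPg0 : 0 ≤ P (fun u => |f u| ^ (2 / p)) z :=
      nonneg_of_mul_nonneg_left ((Real.rpow_nonneg (abs_nonneg _) _).trans (harnack z))
        (Real.exp_pos _)
    rw [← ENNReal.ofReal_mul hPf0, ← ENNReal.ofReal_mul' (Real.exp_pos _).le]
    refine ENNReal.ofReal_le_ofReal ?_
    calc P f x * P f x = (P f x) ^ 2 := (sq _).symm
      _ ≤ (P (fun u => |f u| ^ (2 / p)) z) ^ p * Real.exp (p * c * dist x z ^ 2 / (2 - p)) :=
        sq_le_rpow_mul_exp_of_harnack hp0 hp2 (harnack z)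
      _ ≤ (P (fun u => |f u| ^ (2 / p)) z) ^ p * Real.exp (-dist x z ^ 2 / (2 * (T - q * t))) *
          Real.exp (t / (T - q * t) + 2 * p * c * t / (2 - p)) :=
        (mul_le_mul_of_nonneg_left (exp_le_exp_neg_div_mul_exp hc hp0.le hp2 (sub_pos.2 hT) hdist)
          (Real.rpow_nonneg hPg0 _)).trans_eq (mul_assoc _ _ _).symm
  · rw [hPf_eq]
    refine maxprin.trans (lintegral_mono fun y => ENNReal.ofReal_le_ofReal ?_)
    rw [abs_of_nonneg (hf0 y)]
    exact rpow_two_div_rpow_mul_exp_neg_le hp0.ne' (hf0 y) (hfk y)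

theorem gaussian_weighted_L2_bound_general
    {X : Type*} [MetricSpace X]
    [MeasurableSpace X] [BorelSpace X] (m : Measure X)
    (hm : ∀ s : Set X, Bornology.IsBounded s → m s < ⊤)
    (t : ℝ) (c : ℝ) (hc : 0 < c) (x : X)
    (k : X → X → ℝ)
    (hk_meas : Measurable (fun p : X × X => k p.1 p.2))
    (hk_pos : ∀ w y, 0 < k w y)
    (hk_prob : ∀ w : X, ∫ y, k w y ∂m = 1)
    (P : (X → ℝ) → X → ℝ)
    (hP : ∀ (f : X → ℝ) (w : X), P f w = ∫ y, f y * k w y ∂m)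
    (harnack : ∀ p : ℝ, 1 < p → ∀ w z : X, ∀ f : X → ℝ,
      Integrable f m → MemLp f ⊤ m →
      |P f w| ^ p ≤ P (fun u => |f u| ^ p) z *
        Real.exp (p * c * dist w z ^ 2 / (2 * (p - 1))))
    (p : ℝ) (hp1 : 1 < p) (hp2 : p < 2)
    (q : ℝ)
    (T : ℝ) (hT : q * t < T)
    (maxprin : ∀ g : X → ℝ, (∀ y, 0 ≤ g y) → MemLp g (ENNReal.ofReal p) m →
      ∫⁻ y, ENNReal.ofReal
          ((P g y) ^ p * Real.exp (-dist x y ^ 2 / (2 * (T - q * t)))) ∂m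
        ≤ ∫⁻ y, ENNReal.ofReal
            ((g y) ^ p * Real.exp (-dist x y ^ 2 / (2 * T))) ∂m) :
    ∫⁻ y, ENNReal.ofReal (k x y ^ 2 * Real.exp (dist x y ^ 2 / (2 * T))) ∂m
      ≤ ENNReal.ofReal (Real.exp (t / (T - q * t) + 2 * p * c * t / (2 - p))) /
        m (ball x (Real.sqrt (2 * t))) := by
  have hp0 : 0 < p := by linarith
  have hk_int : Integrable (k x) m :=
    Integrable.of_integral_ne_zero (by rw [hk_prob]; exact one_ne_zero)
  have hkx : Measurable (k x) := hk_meas.comp measurable_prodMk_left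
  set F : X → ℝ := fun y => k x y * Real.exp (dist x y ^ 2 / (2 * T))
  have hF0 : ∀ y, 0 ≤ F y := fun y => mul_nonneg (hk_pos x y).le (Real.exp_pos _).le
  have hF : Measurable F := by fun_prop
  have hFk : ∀ y, k x y ^ 2 * Real.exp (dist x y ^ 2 / (2 * T)) = F y * k x y := fun y => by
    simp only [F]; ring
  simp only [hFk]
  rw [lintegral_ofReal_mul_eq_iSup_ballTruncation m hF0 hF (fun y => (hk_pos x y).le) hkx]
  refine iSup_le fun n => ?_
  have hfn := memLp_ballTruncation (x := x) (n := n) (μ := m) hF0 hF (hm _ isBounded_ball).ne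
  refine lintegral_mul_kernel_le_of_harnack hc.le hp0 hp2 hT hk_int (fun y => (hk_pos x y).le)
    (ballTruncation_nonneg hF0 n) (ballTruncation_le hF0 n) (hfn ⊤) (hP _ x)
    (fun z => harnack _ ((one_lt_div hp0).2 hp2) x z _ (memLp_one_iff_integrable.1 (hfn 1))
      (hfn ⊤)) (maxprin _ (fun y => by positivity) ?_)
  exact memLp_abs_rpow_ballTruncation hF0 hF (hm _ isBounded_ball).ne (by positivity) _

/-- **Gaussian-weighted L² bound for the kernel.**
Let `(X, d)` be a complete separable metric space and `m` a nonnegative Borel measure which is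
finite on bounded sets.  Fix `t > 0`, `c > 0` and `x ∈ X` with `m(B_{√(2t)}(x)) > 0`.
Let `k : X × X → (0,∞)` be measurable with `∫ k(w,y) dm(y) = 1` for every `w`, and set
`P f (w) := ∫ f(y) k(w,y) dm(y)`.  Assume the dimension-free Harnack inequality with
constant `c`.  Fix `p ∈ (1,2)`, set `q := p/(2(p-1))`, let `T > q t`, and assume the
integral maximum principle: for every nonnegative `g ∈ L^p(m)`,
`∫ (Pg)^p(y) exp(-d(x,y)²/(2(T-qt))) dm(y) ≤ ∫ g^p(y) exp(-d(x,y)²/(2T)) dm(y)`.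
Then `∫ k(x,y)² exp(d(x,y)²/(2T)) dm(y) ≤ m(B_{√(2t)}(x))⁻¹ exp(t/(T-qt) + 2pct/(2-p))`. -/
theorem gaussian_weighted_L2_bound
    {X : Type*} [MetricSpace X] [CompleteSpace X] [TopologicalSpace.SeparableSpace X]
    [MeasurableSpace X] [BorelSpace X] (m : Measure X)
    (hm : ∀ s : Set X, Bornology.IsBounded s → m s < ⊤)
    (t : ℝ) (ht : 0 < t) (c : ℝ) (hc : 0 < c) (x : X)
    (hball : 0 < m (ball x (Real.sqrt (2 * t))))
    (k : X → X → ℝ)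
    (hk_meas : Measurable (fun p : X × X => k p.1 p.2))
    (hk_pos : ∀ w y, 0 < k w y)
    (hk_prob : ∀ w : X, ∫ y, k w y ∂m = 1)
    (P : (X → ℝ) → X → ℝ)
    (hP : ∀ (f : X → ℝ) (w : X), P f w = ∫ y, f y * k w y ∂m)
    (harnack : ∀ p : ℝ, 1 < p → ∀ w z : X, ∀ f : X → ℝ,
      Integrable f m → MemLp f ⊤ m →
      |P f w| ^ p ≤ P (fun u => |f u| ^ p) z *
        Real.exp (p * c * dist w z ^ 2 / (2 * (p - 1))))
    (p : ℝ) (hp1 : 1 < p) (hp2 : p < 2)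
    (q : ℝ) (hq : q = p / (2 * (p - 1)))
    (T : ℝ) (hT : q * t < T)
    (maxprin : ∀ g : X → ℝ, (∀ y, 0 ≤ g y) → MemLp g (ENNReal.ofReal p) m →
      ∫⁻ y, ENNReal.ofReal
          ((P g y) ^ p * Real.exp (-dist x y ^ 2 / (2 * (T - q * t)))) ∂m
        ≤ ∫⁻ y, ENNReal.ofReal
            ((g y) ^ p * Real.exp (-dist x y ^ 2 / (2 * T))) ∂m) :
    ∫⁻ y, ENNReal.ofReal (k x y ^ 2 * Real.exp (dist x y ^ 2 / (2 * T))) ∂m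
      ≤ ENNReal.ofReal (Real.exp (t / (T - q * t) + 2 * p * c * t / (2 - p))) /
        m (ball x (Real.sqrt (2 * t))) :=
  gaussian_weighted_L2_bound_general m hm t c hc x k hk_meas hk_pos hk_prob P hP harnack p hp1 hp2 q
    T hT maxprin
end
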